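/- arXiv:2603.25564 — 2 statements merged into one kernel-verified Lean document; each statement's English description precedes it below -/
import Mathlib

section
/- Let k ≥ 2 be an even integer, ℓ an odd prime, 0 < α < β real, a ∈ ℤ_{≥1}, and t ∈ ℤ with t² < 4ℓ^{a+1}β. Then ∫ from max{αℓ^a, t²/(4ℓ)} to βℓ^a of |d/du (cos((k−1) φ_{t, ℓu}) · √u)| du ≤ C(β, k) · ℓ^{a/2}, for a constant C(β, k) depending only on β and k. -/
open scoped BigOperators ArithmeticFunction

/-- `d` is a fundamental discriminant. -/
def IsFundDisc (d : ℤ) : Prop :=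
  (d % 4 = 1 ∧ Squarefree d) ∨
  (d % 4 = 0 ∧ (d / 4 % 4 = 2 ∨ d / 4 % 4 = 3) ∧ Squarefree (d / 4))

/-- The Kronecker symbol `(a/2)`. -/
def kron2 (a : ℤ) : ℤ :=
  if a % 2 = 0 then 0 else if a % 8 = 1 ∨ a % 8 = 7 then 1 else -1

/-- The Kronecker symbol `(a/n)` for `n ≥ 1`, defined as the product of `(a/2)` to the power of
the 2-adic valuation of `n` with the Jacobi symbol of `a` over the odd part of `n`. -/
def kron (a : ℤ) (n : ℕ) : ℤ :=
  kron2 a ^ (n.factorization 2) * jacobiSym a (ordCompl[2] n)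

/- For `D = d·L²` with `d` a fundamental discriminant and `L ≥ 0`,
`psiD D m = (d/(m/gcd(m,L)))` (Kronecker symbol), with the convention `psiD 0 m = 1`. -/
open Classical in
noncomputable def psiD (D : ℤ) (m : ℕ) : ℤ :=
  if D = 0 then 1
  else if h : ∃ dL : ℤ × ℕ, IsFundDisc dL.1 ∧ D = dL.1 * (dL.2 : ℤ) ^ 2 then
    kron h.choose.1 (m / Nat.gcd m h.choose.2)
  else 0

/-- `ψ̃_t(m) := φ(m²)⁻¹ ∑*_{n mod m²} ψ_{t²-4n}(m)`. -/
noncomputable def psiTilde (t : ℤ) (m : ℕ) : ℚ :=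
  (Nat.totient (m ^ 2) : ℚ)⁻¹ *
    ∑ n ∈ (Finset.range (m ^ 2)).filter (fun n => Nat.Coprime n m),
      (psiD (t ^ 2 - 4 * n) m : ℚ)

/-- `ψ̃_t^{(ℓ)}(m) := φ(m²)⁻¹ ∑*_{n mod m²} ψ_{t²-4ℓn}(m)`. -/
noncomputable def psiTildeL (ℓ : ℕ) (t : ℤ) (m : ℕ) : ℚ :=
  (Nat.totient (m ^ 2) : ℚ)⁻¹ *
    ∑ n ∈ (Finset.range (m ^ 2)).filter (fun n => Nat.Coprime n m),
      (psiD (t ^ 2 - 4 * ℓ * n) m : ℚ)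

/-- `L(1, ψ_D) = ∑_{m ≥ 1} ψ_D(m)/m`, defined as the limit of partial sums. -/
noncomputable def L1psi (D : ℤ) : ℝ :=
  Filter.limUnder Filter.atTop (fun N : ℕ => ∑ m ∈ Finset.Icc 1 N, (psiD D m : ℝ) / m)

/-- `E(u; q, a) = |∑_{n ≤ u, n ≡ a (q)} Λ(n) - u/φ(q)|`. -/
noncomputable def Efn (u : ℝ) (q : ℕ) (a : ℤ) : ℝ :=
  |(∑ n ∈ Finset.Icc 1 (Nat.floor u),
      if (n : ℤ) % (q : ℤ) = a % (q : ℤ) then ArithmeticFunction.vonMangoldt n else 0)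
    - u / (Nat.totient q)|

/-- `E(u, q) = max_{a : (a,q)=1} E(u; q, a)`. -/
noncomputable def Emax (u : ℝ) (q : ℕ) : ℝ :=
  ⨆ a : {a : ℤ // 0 ≤ a ∧ a < q ∧ IsCoprime a (q : ℤ)}, Efn u q a

open Set MeasureTheory in
lemma arcsin_comp_hasDerivAt (t L : ℝ) {u : ℝ} (hL : 0 < L) (hu : 0 < u)
    (ht : t ^ 2 < 4 * (L * u)) :
    HasDerivAt (fun v : ℝ => Real.arcsin (t / (2 * Real.sqrt (L * v))))
      ((1 / Real.sqrt (1 - (t / (2 * Real.sqrt (L * u))) ^ 2)) *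
        (-t / (4 * u * Real.sqrt (L * u)))) u := by
  have hLu : 0 < L * u := mul_pos hL hu
  have hs : 0 < Real.sqrt (L * u) := Real.sqrt_pos.2 hLu
  have hs2 : Real.sqrt (L * u) ^ 2 = L * u := Real.sq_sqrt hLu.le
  have hx2 : (t / (2 * Real.sqrt (L * u))) ^ 2 < 1 := by
    rw [div_pow, div_lt_one (by positivity)]
    nlinarith
  have hx1 : t / (2 * Real.sqrt (L * u)) ≠ 1 := by
    intro h; rw [h] at hx2; norm_num at hx2
  have hxm1 : t / (2 * Real.sqrt (L * u)) ≠ -1 := by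
    intro h; rw [h] at hx2; norm_num at hx2
  have h1 : HasDerivAt (fun v : ℝ => L * v) (L * 1) u := (hasDerivAt_id u).const_mul L
  have h2 : HasDerivAt (fun v : ℝ => Real.sqrt (L * v)) (1 / (2 * Real.sqrt (L * u)) * (L * 1)) u :=
    (Real.hasDerivAt_sqrt hLu.ne').comp u h1
  have hden : HasDerivAt (fun v : ℝ => 2 * Real.sqrt (L * v))
      (2 * (1 / (2 * Real.sqrt (L * u)) * (L * 1))) u := h2.const_mul 2
  have hinner : HasDerivAt (fun v : ℝ => t / (2 * Real.sqrt (L * v)))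
      (-t / (4 * u * Real.sqrt (L * u))) u := by
    have := (hasDerivAt_const u t).div hden (by positivity)
    refine this.congr_deriv ?_
    symm
    have hq : (Real.sqrt L * Real.sqrt u) ^ 2 = L * u := by
      rw [mul_pow, Real.sq_sqrt hL.le, Real.sq_sqrt hu.le]
    field_simp
    ring_nf
    linear_combination (-4 * t) * Real.sq_sqrt (by positivity : (0:ℝ) ≤ u * L)
  have := (Real.hasDerivAt_arcsin hxm1 hx1).comp u hinner
  exact this


open Set MeasureTheory in
/-- the total variation of `u ↦ cos((k-1)φ_{t,ℓu})√u` on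
`[max(αℓ^a, t²/(4ℓ)), βℓ^a]` is `O_{β,k}(ℓ^{a/2})`. -/
theorem variation_bound (k : ℕ) (hk : 2 ≤ k) (hke : Even k) (β : ℝ) (hβ : 0 < β) :
    ∃ C : ℝ, 0 < C ∧
      ∀ (ℓ : ℕ), ℓ.Prime → ℓ ≠ 2 → ∀ α : ℝ, 0 < α → α < β →
      ∀ a : ℕ, 1 ≤ a → ∀ t : ℤ, (t : ℝ) ^ 2 < 4 * (ℓ : ℝ) ^ (a + 1) * β →
      (∫ u in (max (α * (ℓ : ℝ) ^ a) ((t : ℝ) ^ 2 / (4 * ℓ)))..(β * (ℓ : ℝ) ^ a),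
        |deriv (fun u : ℝ =>
            Real.cos (((k : ℝ) - 1) * Real.arcsin ((t : ℝ) / (2 * Real.sqrt (ℓ * u))))
              * Real.sqrt u) u|)
        ≤ C * Real.sqrt ((ℓ : ℝ) ^ a) := by
  have hk1 : (1:ℝ) ≤ (k:ℝ) - 1 := by
    have : (2:ℝ) ≤ (k:ℝ) := by exact_mod_cast hk
    linarith
  have hπ := Real.pi_pos
  refine ⟨(((k:ℝ)-1) * Real.pi + 1) * Real.sqrt β, ?_, ?_⟩
  · have h2 := Real.sqrt_pos.2 hβ
    have h3 : (0:ℝ) < ((k:ℝ)-1) * Real.pi + 1 := by nlinarith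
    exact mul_pos h3 h2
  intro ℓ hℓp hℓ2 α hα hαβ a ha t ht
  have hL : (0:ℝ) < (ℓ:ℝ) := by exact_mod_cast hℓp.pos
  have hPa : (0:ℝ) < (ℓ:ℝ)^a := by positivity
  set b : ℝ := β * (ℓ:ℝ)^a with hbdef
  set c : ℝ := max (α * (ℓ:ℝ)^a) ((t:ℝ)^2 / (4*(ℓ:ℝ))) with hcdef
  have hb : 0 < b := by positivity
  have hc0 : 0 < c := lt_max_of_lt_left (by positivity)
  have hcb : c < b := by
    apply max_lt
    · have := mul_lt_mul_of_pos_right hαβ hPa; linarith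
    · rw [div_lt_iff₀ (by positivity)]
      have hp : (ℓ:ℝ)^(a+1) = (ℓ:ℝ)^a * ℓ := pow_succ _ _
      nlinarith
  have hsb : 0 < Real.sqrt b := Real.sqrt_pos.2 hb
  set φ' : ℝ → ℝ := fun u => (1 / Real.sqrt (1 - ((t:ℝ) / (2 * Real.sqrt (ℓ * u))) ^ 2)) *
      (-(t:ℝ) / (4 * u * Real.sqrt (ℓ * u))) with hφ'def
  set M : ℝ → ℝ := fun u => ((k:ℝ)-1) * Real.sqrt b * |φ' u| + 1/(2*Real.sqrt u) with hMdef
  set ε : ℝ := if (0:ℤ) ≤ t then 1 else -1 with hεdef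
  set F : ℝ → ℝ := fun u => (-ε * (((k:ℝ)-1) * Real.sqrt b)) *
      Real.arcsin ((t:ℝ) / (2 * Real.sqrt (ℓ * u))) + Real.sqrt u with hFdef
  clear_value b c φ' M ε F
  have hεt : ε * (t:ℝ) = |(t:ℝ)| := by
    rw [hεdef]; split_ifs with h
    · rw [one_mul, abs_of_nonneg (by exact_mod_cast h)]
    · rw [abs_of_neg (by exact_mod_cast not_le.1 h)]; ring
  have hε1 : ε = 1 ∨ ε = -1 := by rw [hεdef]; split_ifs <;> simp
  have ht4 : ∀ u, c < u → ((t:ℝ))^2 < 4*((ℓ:ℝ)*u) := by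
    intro u hu
    have h1 : (t:ℝ)^2/(4*(ℓ:ℝ)) ≤ c := by rw [hcdef]; exact le_max_right _ _
    have h2 := h1.trans_lt hu
    rw [div_lt_iff₀ (by positivity)] at h2; linarith
  have hφderiv : ∀ u, c < u →
      HasDerivAt (fun v : ℝ => Real.arcsin ((t:ℝ) / (2 * Real.sqrt (ℓ * v)))) (φ' u) u := by
    intro u hu
    rw [hφ'def]
    exact arcsin_comp_hasDerivAt _ _ hL (hc0.trans hu) (ht4 u hu)
  have hgderiv : ∀ u, c < u → HasDerivAt (fun v : ℝ =>
      Real.cos (((k : ℝ) - 1) * Real.arcsin ((t : ℝ) / (2 * Real.sqrt (ℓ * v)))) * Real.sqrt v)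
      ((-Real.sin (((k:ℝ)-1) * Real.arcsin ((t:ℝ) / (2 * Real.sqrt (ℓ * u)))) *
          (((k:ℝ)-1) * φ' u)) * Real.sqrt u
        + Real.cos (((k:ℝ)-1) * Real.arcsin ((t:ℝ) / (2 * Real.sqrt (ℓ * u)))) *
          (1/(2*Real.sqrt u))) u :=
    fun u hu => (((hφderiv u hu).const_mul ((k:ℝ)-1)).cos).mul
      (Real.hasDerivAt_sqrt (hc0.trans hu).ne')
  have habs : ∀ u, c < u → |φ' u| = -ε * φ' u := by
    intro u hu
    have hu0 : 0 < u := hc0.trans hu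
    have hA : (0:ℝ) ≤ 1 / Real.sqrt (1 - ((t:ℝ) / (2 * Real.sqrt (ℓ * u))) ^ 2) := by positivity
    have h4 : (0:ℝ) < 4 * u * Real.sqrt (ℓ * u) :=
      mul_pos (by positivity) (Real.sqrt_pos.2 (by positivity))
    rw [hφ'def]
    simp only
    rw [abs_mul, abs_of_nonneg hA, abs_div, abs_neg, abs_of_pos h4, ← hεt]
    ring
  have hbound : ∀ u ∈ Ioc c b, |deriv (fun v : ℝ =>
      Real.cos (((k : ℝ) - 1) * Real.arcsin ((t : ℝ) / (2 * Real.sqrt (ℓ * v)))) * Real.sqrt v) u|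
      ≤ M u := by
    intro u hu
    rw [(hgderiv u hu.1).deriv]
    have hsu : Real.sqrt u ≤ Real.sqrt b := Real.sqrt_le_sqrt hu.2
    have hsu0 : 0 < Real.sqrt u := Real.sqrt_pos.2 (hc0.trans hu.1)
    have hA1 : |(-Real.sin (((k:ℝ)-1) * Real.arcsin ((t:ℝ) / (2 * Real.sqrt (ℓ * u)))) *
        (((k:ℝ)-1) * φ' u)) * Real.sqrt u| ≤ ((k:ℝ)-1) * Real.sqrt b * |φ' u| := by
      rw [abs_mul, abs_mul, abs_neg, abs_mul,
        abs_of_nonneg (show (0:ℝ) ≤ (k:ℝ)-1 by linarith), abs_of_nonneg (Real.sqrt_nonneg u)]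
      have h1 := Real.abs_sin_le_one (((k:ℝ)-1) * Real.arcsin ((t:ℝ) / (2 * Real.sqrt (ℓ * u))))
      have h2 := abs_nonneg (φ' u)
      have hkφ : (0:ℝ) ≤ ((k:ℝ)-1) * |φ' u| := mul_nonneg (by linarith) h2
      have e1 := mul_le_mul (mul_le_mul_of_nonneg_right h1 hkφ) hsu hsu0.le
        (by linarith [one_mul (((k:ℝ)-1) * |φ' u|)] : (0:ℝ) ≤ 1 * (((k:ℝ)-1) * |φ' u|))
      nlinarith [e1]
    have hA2 : |Real.cos (((k:ℝ)-1) * Real.arcsin ((t:ℝ) / (2 * Real.sqrt (ℓ * u)))) *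
        (1/(2*Real.sqrt u))| ≤ 1/(2*Real.sqrt u) := by
      rw [abs_mul, abs_of_pos (show (0:ℝ) < 1/(2*Real.sqrt u) by positivity)]
      have h1 := Real.abs_cos_le_one (((k:ℝ)-1) * Real.arcsin ((t:ℝ) / (2 * Real.sqrt (ℓ * u))))
      have hpos : (0:ℝ) ≤ 1/(2*Real.sqrt u) := by positivity
      nlinarith [mul_le_mul_of_nonneg_right h1 hpos]
    calc |_ + _| ≤ _ := abs_add_le _ _
      _ ≤ M u := by rw [hMdef]; simp only; linarith
  have hFderiv : ∀ u ∈ Ioo c b, HasDerivAt F (M u) u := by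
    intro u hu
    have h1 := ((hφderiv u hu.1).const_mul (-ε * (((k:ℝ)-1) * Real.sqrt b))).add
      (Real.hasDerivAt_sqrt (hc0.trans hu.1).ne')
    rw [hFdef]
    refine h1.congr_deriv ?_
    symm
    rw [hMdef]
    simp only
    rw [habs u hu.1]
    ring
  have hFcont : ContinuousOn F (Icc c b) := by
    rw [hFdef]
    apply ContinuousOn.add
    · apply continuousOn_const.mul
      apply Real.continuous_arcsin.comp_continuousOn
      apply ContinuousOn.div continuousOn_const
      · exact (continuous_const.mul (Real.continuous_sqrt.comp
          (continuous_const.mul continuous_id))).continuousOn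
      · intro u hu
        have : (0:ℝ) < Real.sqrt ((ℓ:ℝ) * u) :=
          Real.sqrt_pos.2 (mul_pos hL (hc0.trans_le hu.1))
        positivity
    · exact Real.continuous_sqrt.continuousOn
  have hMnonneg : ∀ u ∈ Ioo c b, 0 ≤ M u := by
    intro u hu
    rw [hMdef]
    have hsu0 : 0 < Real.sqrt u := Real.sqrt_pos.2 (hc0.trans hu.1)
    have := abs_nonneg (φ' u)
    simp only
    have h5 : (0:ℝ) < 1/(2*Real.sqrt u) := by positivity
    have h6 : (0:ℝ) ≤ ((k:ℝ)-1) * Real.sqrt b * |φ' u| :=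
      mul_nonneg (mul_nonneg (by linarith) hsb.le) (abs_nonneg _)
    linarith
  have hMint : IntegrableOn M (Ioc c b) :=
    intervalIntegral.integrableOn_deriv_of_nonneg hFcont hFderiv hMnonneg
  have hMII : IntervalIntegrable M volume c b := by
    rw [intervalIntegrable_iff_integrableOn_Ioc_of_le hcb.le]
    exact hMint
  have hFTC : ∫ u in c..b, M u = F b - F c :=
    intervalIntegral.integral_eq_sub_of_hasDerivAt_of_le hcb.le hFcont hFderiv hMII
  rw [intervalIntegral.integral_of_le hcb.le]
  have step1 : ∫ u in Ioc c b, |deriv (fun v : ℝ =>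
      Real.cos (((k : ℝ) - 1) * Real.arcsin ((t : ℝ) / (2 * Real.sqrt (ℓ * v)))) * Real.sqrt v) u|
      ≤ ∫ u in Ioc c b, M u := by
    apply integral_mono_of_nonneg
    · exact Filter.Eventually.of_forall fun u => abs_nonneg _
    · exact hMint
    · exact (ae_restrict_iff' measurableSet_Ioc).2 (Filter.Eventually.of_forall hbound)
  have step2 : ∫ u in Ioc c b, M u = F b - F c := by
    rw [← intervalIntegral.integral_of_le hcb.le]; exact hFTC
  have step3 : F b - F c ≤ ((k:ℝ)-1) * Real.pi * Real.sqrt b + Real.sqrt b := by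
    rw [hFdef]
    simp only
    have hb1 := Real.arcsin_le_pi_div_two ((t:ℝ) / (2 * Real.sqrt (ℓ * b)))
    have hb2 := Real.neg_pi_div_two_le_arcsin ((t:ℝ) / (2 * Real.sqrt (ℓ * b)))
    have hc1 := Real.arcsin_le_pi_div_two ((t:ℝ) / (2 * Real.sqrt (ℓ * c)))
    have hc2 := Real.neg_pi_div_two_le_arcsin ((t:ℝ) / (2 * Real.sqrt (ℓ * c)))
    have hsc := Real.sqrt_nonneg c
    have hscb : Real.sqrt c ≤ Real.sqrt b := Real.sqrt_le_sqrt hcb.le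
    have hkb : (0:ℝ) ≤ ((k:ℝ)-1) * Real.sqrt b := mul_nonneg (by linarith) hsb.le
    have hd1 : Real.arcsin ((t:ℝ) / (2 * Real.sqrt (ℓ * c)))
        - Real.arcsin ((t:ℝ) / (2 * Real.sqrt (ℓ * b))) ≤ Real.pi := by linarith
    have hd2 : Real.arcsin ((t:ℝ) / (2 * Real.sqrt (ℓ * b)))
        - Real.arcsin ((t:ℝ) / (2 * Real.sqrt (ℓ * c))) ≤ Real.pi := by linarith
    have hm1 := mul_le_mul_of_nonneg_left hd1 hkb
    have hm2 := mul_le_mul_of_nonneg_left hd2 hkb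
    rcases hε1 with h | h <;> rw [h] <;> linarith [hm1, hm2]
  have step4 : ((k:ℝ)-1) * Real.pi * Real.sqrt b + Real.sqrt b
      = ((((k:ℝ)-1) * Real.pi + 1) * Real.sqrt β) * Real.sqrt ((ℓ:ℝ)^a) := by
    rw [hbdef, Real.sqrt_mul hβ.le]
    ring
  linarith [step1, step2.le, step3, step4.le]
end

section
/- Let m ∈ ℤ_{≥1} and a an integer coprime to m. Let 2 ≤ A < B be real numbers, let Φ be continuously differentiable on [A,B], and set M := max_{u ∈ [A,B]} |Φ(u)| and V := ∫_A^B |Φ'(u)| du. Then |∑_{p prime, A < p ≤ B, p ≡ a (mod m²)} Φ(p) log p − (1/φ(m²)) ∫_A^B Φ(u) du| ≪ (M + V) · (√B + max_{u ∈ [A,B]} E(u; m², a)), with an absolute implied constant. -/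
open scoped BigOperators ArithmeticFunction

section PSAuxiliary
open Finset

lemma theta_le (n : ℕ) :
    ∑ p ∈ (Finset.range (n+1)).filter Nat.Prime, Real.log p ≤ n * Real.log 4 := by
  have h1 : ∑ p ∈ (Finset.range (n+1)).filter Nat.Prime, Real.log p
      = Real.log (primorial n) := by
    rw [primorial, Nat.cast_prod, Real.log_prod]
    intro p hp
    simp only [mem_filter] at hp
    exact_mod_cast hp.2.pos.ne'
  rw [h1]
  calc Real.log (primorial n) ≤ Real.log ((4:ℕ) ^ n) := by
        apply Real.log_le_log (by exact_mod_cast primorial_pos n)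
        exact_mod_cast primorial_le_4_pow n
    _ = n * Real.log 4 := by push_cast; rw [Real.log_pow]

-- squares-of-primes part
open Classical in
lemma partA (N : ℕ) :
    ∑ k ∈ ((Finset.Icc 0 N).filter (fun k => ¬ k.Prime)).filter
        (fun k => ∃ p : ℕ, p.Prime ∧ k = p ^ 2), Λ k
      ≤ (Nat.sqrt N) * Real.log 4 := by
  set P := (Finset.range (N.sqrt + 1)).filter Nat.Prime with hP
  have hsub : ((Finset.Icc 0 N).filter (fun k => ¬ k.Prime)).filter
      (fun k => ∃ p : ℕ, p.Prime ∧ k = p ^ 2) ⊆ P.image (fun p => p ^ 2) := by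
    intro k hk
    simp only [mem_filter, Finset.mem_Icc] at hk
    obtain ⟨⟨⟨_, hkN⟩, _⟩, p, hp, rfl⟩ := hk
    refine Finset.mem_image.mpr ⟨p, ?_, rfl⟩
    simp only [hP, mem_filter, Finset.mem_range]
    refine ⟨Nat.lt_succ_of_le ?_, hp⟩
    exact Nat.le_sqrt.mpr (by nlinarith [hkN])
  calc ∑ k ∈ _, Λ k ≤ ∑ k ∈ P.image (fun p => p ^ 2), Λ k := by
        apply Finset.sum_le_sum_of_subset_of_nonneg hsub
        intro _ _ _; exact ArithmeticFunction.vonMangoldt_nonneg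
    _ = ∑ p ∈ P, Λ (p ^ 2) := by
        apply Finset.sum_image
        intro a _ b _ h
        exact Nat.pow_left_injective (by norm_num) h
    _ = ∑ p ∈ P, Real.log p := by
        apply Finset.sum_congr rfl
        intro p hp
        simp only [hP, mem_filter] at hp
        rw [ArithmeticFunction.vonMangoldt_apply_pow two_ne_zero,
          ArithmeticFunction.vonMangoldt_apply_prime hp.2]
    _ ≤ (Nat.sqrt N) * Real.log 4 := theta_le _
open Classical in
lemma partB (B : ℝ) (hB : 2 ≤ B) :
    ∑ k ∈ ((Finset.Icc 0 (Nat.floor B)).filter (fun k => ¬ k.Prime)).filter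
        (fun k => ¬ ∃ p : ℕ, p.Prime ∧ k = p ^ 2), Λ k
      ≤ 8 * B ^ ((3:ℝ)⁻¹) * Real.log B ^ 2 := by
  have hB0 : (0:ℝ) < B := by linarith
  set N := Nat.floor B with hNdef
  have hN2 : 2 ≤ N := Nat.le_floor (by exact_mod_cast hB)
  have hNB : (N:ℝ) ≤ B := Nat.floor_le hB0.le
  set S : Finset ℕ := ((Finset.Icc 0 N).filter (fun k => ¬ k.Prime)).filter
      (fun k => ¬ ∃ p : ℕ, p.Prime ∧ k = p ^ 2) with hS
  set S' : Finset ℕ := S.filter (fun k => Λ k ≠ 0) with hS'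
  have hsum : ∑ k ∈ S, Λ k = ∑ k ∈ S', Λ k := by
    rw [hS', Finset.sum_filter_ne_zero]
  -- structure of elements of S'
  have hstruct : ∀ k ∈ S', (k.minFac).Prime ∧ 3 ≤ k.factorization k.minFac ∧
      k.minFac ^ (k.factorization k.minFac) = k ∧ k ≤ N := by
    intro k hk
    simp only [hS', hS, mem_filter, Finset.mem_Icc] at hk
    obtain ⟨⟨⟨⟨_, hkN⟩, hknp⟩, hknsq⟩, hkL⟩ := hk
    obtain ⟨p, j, hp, hj, rfl⟩ := ArithmeticFunction.vonMangoldt_ne_zero_iff.mp hkL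
    have hpn : p.Prime := hp.nat_prime
    have hmf : (p ^ j).minFac = p := hpn.pow_minFac hj.ne'
    have hfac : (p ^ j).factorization p = j := by
      rw [hpn.factorization_pow, Finsupp.single_eq_same]
    rw [hmf, hfac]
    have hj1 : j ≠ 1 := by rintro rfl; simp at hknp; exact hknp hpn
    have hj2 : j ≠ 2 := by rintro rfl; exact hknsq ⟨p, hpn, rfl⟩
    exact ⟨hpn, by omega, rfl, hkN⟩
  -- cardinality bound
  set R := Nat.floor (B ^ ((3:ℝ)⁻¹)) with hR
  set Lg := Nat.log 2 N with hLg
  have hcard : S'.card ≤ (R+1) * (Lg+1) := by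
    have := Finset.card_le_card_of_injOn
      (fun k : ℕ => (k.minFac, k.factorization k.minFac))
      (t := (Finset.range (R+1)) ×ˢ (Finset.range (Lg+1)))
      (fun k hk => by
        obtain ⟨hp, hj3, hpow, hkN⟩ := hstruct k hk
        simp only [Finset.mem_coe, Finset.mem_product, Finset.mem_range, Nat.lt_succ_iff]
        constructor
        · -- minFac ≤ R
          apply Nat.le_floor
          set p := k.minFac
          set j := k.factorization k.minFac
          have h3 : (p:ℝ)^(3:ℕ) ≤ B := by
            have : p ^ 3 ≤ k := by
              calc p ^ 3 ≤ p ^ j := Nat.pow_le_pow_right hp.pos hj3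
                _ = k := hpow
            calc ((p:ℝ))^(3:ℕ) = ((p^3 : ℕ) : ℝ) := by push_cast; ring
              _ ≤ (k:ℝ) := by exact_mod_cast this
              _ ≤ (N:ℝ) := by exact_mod_cast hkN
              _ ≤ B := hNB
          have hp0 : (0:ℝ) ≤ (p:ℝ) := by positivity
          calc (p:ℝ) = ((p:ℝ) ^ (3:ℕ)) ^ ((3:ℝ)⁻¹) := by
                rw [← Real.rpow_natCast (p:ℝ) 3, ← Real.rpow_mul hp0]
                norm_num
            _ ≤ B ^ ((3:ℝ)⁻¹) := Real.rpow_le_rpow (by positivity) h3 (by norm_num)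
        · -- exponent ≤ Lg
          rw [hLg, Nat.le_log_iff_pow_le one_lt_two (by omega)]
          calc 2 ^ (k.factorization k.minFac) ≤ k.minFac ^ (k.factorization k.minFac) :=
                Nat.pow_le_pow_left hp.two_le _
            _ = k := hpow
            _ ≤ N := hkN)
      (by
        intro k1 h1 k2 h2 heq
        obtain ⟨_, _, hpow1, _⟩ := hstruct k1 h1
        obtain ⟨_, _, hpow2, _⟩ := hstruct k2 h2
        rw [Prod.ext_iff] at heq
        simp only at heq
        rw [← hpow1, ← hpow2, heq.2, heq.1])
    simpa using this
  -- sum ≤ card * log B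
  have hlogB : ∀ k ∈ S', Λ k ≤ Real.log B := by
    intro k hk
    obtain ⟨hp, _, hpow, hkN⟩ := hstruct k hk
    calc Λ k ≤ Real.log k := ArithmeticFunction.vonMangoldt_le_log
      _ ≤ Real.log B := by
        apply Real.log_le_log
        · have : 0 < k := by
            rw [← hpow]; exact Nat.pow_pos hp.pos
          exact_mod_cast this
        · calc (k:ℝ) ≤ (N:ℝ) := by exact_mod_cast hkN
            _ ≤ B := hNB
  have hsum2 : ∑ k ∈ S', Λ k ≤ (S'.card : ℝ) * Real.log B := by
    calc ∑ k ∈ S', Λ k ≤ ∑ _k ∈ S', Real.log B := Finset.sum_le_sum hlogB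
      _ = (S'.card : ℝ) * Real.log B := by rw [Finset.sum_const, nsmul_eq_mul]
  -- numerics
  have hlog2 : (0.6931471803 : ℝ) < Real.log 2 := Real.log_two_gt_d9
  have hlogB2 : Real.log 2 ≤ Real.log B := Real.log_le_log two_pos hB
  have hlogBpos : (1/2 : ℝ) < Real.log B := by linarith
  have hRreal : (R:ℝ) ≤ B ^ ((3:ℝ)⁻¹) := Nat.floor_le (by positivity)
  have hBthird1 : (1:ℝ) ≤ B ^ ((3:ℝ)⁻¹) := by
    apply Real.one_le_rpow (by linarith) (by norm_num)
  have hLgreal : (Lg : ℝ) ≤ 2 * Real.log B := by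
    have h1 : (2:ℝ) ^ Lg ≤ B := by
      have h0 : (2:ℕ)^Lg ≤ N := Nat.pow_log_le_self 2 (by omega)
      calc (2:ℝ) ^ Lg = ((2^Lg : ℕ) : ℝ) := by push_cast; ring
        _ ≤ (N:ℝ) := by exact_mod_cast h0
        _ ≤ B := hNB
    have h2 : (Lg:ℝ) * Real.log 2 ≤ Real.log B := by
      calc (Lg:ℝ) * Real.log 2 = Real.log ((2:ℝ)^Lg) := by rw [Real.log_pow]
        _ ≤ Real.log B := Real.log_le_log (by positivity) h1
    nlinarith [hlog2]
  calc ∑ k ∈ S, Λ k = ∑ k ∈ S', Λ k := hsum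
    _ ≤ (S'.card : ℝ) * Real.log B := hsum2
    _ ≤ ((R+1) * (Lg+1) : ℝ) * Real.log B := by
        apply mul_le_mul_of_nonneg_right _ (by linarith)
        have : (S'.card : ℝ) ≤ ((R+1)*(Lg+1) : ℕ) := by exact_mod_cast hcard
        calc (S'.card : ℝ) ≤ (((R+1)*(Lg+1) : ℕ):ℝ) := this
          _ = ((R+1) * (Lg+1) : ℝ) := by push_cast; ring
    _ ≤ (2 * B ^ ((3:ℝ)⁻¹)) * (4 * Real.log B) * Real.log B := by
        apply mul_le_mul_of_nonneg_right _ (by linarith)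
        apply mul_le_mul
        · linarith
        · linarith
        · positivity
        · positivity
    _ = 8 * B ^ ((3:ℝ)⁻¹) * Real.log B ^ 2 := by ring

open Classical in
lemma Sbound (B : ℝ) (hB : 2 ≤ B) :
    ∑ k ∈ (Finset.Icc 0 (Nat.floor B)).filter (fun k => ¬ k.Prime), Λ k
      ≤ 1154 * Real.sqrt B := by
  have hB0 : (0:ℝ) < B := by linarith
  have hsplit := Finset.sum_filter_add_sum_filter_not
    ((Finset.Icc 0 (Nat.floor B)).filter (fun k => ¬ k.Prime))
    (fun k => ∃ p : ℕ, p.Prime ∧ k = p ^ 2) (fun k => Λ k)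
  rw [← hsplit]
  have hA := partA (Nat.floor B)
  have hBp := partB B hB
  -- part A numeric
  have hsq : (Nat.sqrt (Nat.floor B) : ℝ) ≤ Real.sqrt B := by
    have h1 : (Nat.sqrt (Nat.floor B) : ℝ)^2 ≤ B := by
      have h0 : (Nat.sqrt (Nat.floor B))^2 ≤ Nat.floor B := Nat.sqrt_le' _
      calc (Nat.sqrt (Nat.floor B) : ℝ)^2
          = (((Nat.sqrt (Nat.floor B))^2 : ℕ) : ℝ) := by push_cast; ring
        _ ≤ ((Nat.floor B : ℕ) : ℝ) := by exact_mod_cast h0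
        _ ≤ B := Nat.floor_le hB0.le
    exact (Real.le_sqrt (by positivity) hB0.le).mpr h1
  have hlog4 : Real.log 4 ≤ 2 := by
    have : Real.log 4 = 2 * Real.log 2 := by
      rw [show (4:ℝ) = 2^2 by norm_num, Real.log_pow]; push_cast; ring
    rw [this]
    nlinarith [Real.log_two_lt_d9]
  have hA2 : (Nat.sqrt (Nat.floor B) : ℝ) * Real.log 4 ≤ 2 * Real.sqrt B := by
    calc (Nat.sqrt (Nat.floor B) : ℝ) * Real.log 4
        ≤ Real.sqrt B * 2 := by
          apply mul_le_mul hsq hlog4 (by positivity) (Real.sqrt_nonneg B)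
      _ = 2 * Real.sqrt B := by ring
  -- part B numeric
  have hlogB0 : 0 ≤ Real.log B := Real.log_nonneg (by linarith)
  have h12 : Real.log B ≤ 12 * B ^ ((12:ℝ)⁻¹) := by
    have h1 : Real.log (B ^ ((12:ℝ)⁻¹)) ≤ B ^ ((12:ℝ)⁻¹) - 1 :=
      Real.log_le_sub_one_of_pos (by positivity)
    rw [Real.log_rpow hB0] at h1
    linarith [Real.rpow_nonneg hB0.le ((12:ℝ)⁻¹)]
  have hB2 : 8 * B ^ ((3:ℝ)⁻¹) * Real.log B ^ 2 ≤ 1152 * Real.sqrt B := by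
    have hsq2 : Real.log B ^ 2 ≤ 144 * (B ^ ((12:ℝ)⁻¹) * B ^ ((12:ℝ)⁻¹)) := by
      have := mul_le_mul h12 h12 hlogB0 (by positivity)
      calc Real.log B ^ 2 = Real.log B * Real.log B := sq (Real.log B) ▸ by ring
        _ ≤ (12 * B ^ ((12:ℝ)⁻¹)) * (12 * B ^ ((12:ℝ)⁻¹)) := this
        _ = 144 * (B ^ ((12:ℝ)⁻¹) * B ^ ((12:ℝ)⁻¹)) := by ring
    have hid : B ^ ((3:ℝ)⁻¹) * (B ^ ((12:ℝ)⁻¹) * B ^ ((12:ℝ)⁻¹)) = Real.sqrt B := by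
      rw [Real.sqrt_eq_rpow, ← Real.rpow_add hB0, ← Real.rpow_add hB0]
      norm_num
    calc 8 * B ^ ((3:ℝ)⁻¹) * Real.log B ^ 2
        ≤ 8 * B ^ ((3:ℝ)⁻¹) * (144 * (B ^ ((12:ℝ)⁻¹) * B ^ ((12:ℝ)⁻¹))) := by
          apply mul_le_mul_of_nonneg_left hsq2 (by positivity)
      _ = 1152 * (B ^ ((3:ℝ)⁻¹) * (B ^ ((12:ℝ)⁻¹) * B ^ ((12:ℝ)⁻¹))) := by ring
      _ = 1152 * Real.sqrt B := by rw [hid]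
  linarith [hA.trans hA2, hBp.trans hB2]


lemma abs_add4 (a b c d : ℝ) : |a + b - c - d| ≤ |a| + |b| + |c| + |d| := by
  apply abs_le.mpr
  constructor <;>
    · have := neg_abs_le a; have := le_abs_self a
      have := neg_abs_le b; have := le_abs_self b
      have := neg_abs_le c; have := le_abs_self c
      have := neg_abs_le d; have := le_abs_self d
      linarith



variable {m : ℕ} {a : ℤ} {A B : ℝ} {Φ Φ' : ℝ → ℝ} {M V : ℝ}

theorem main_thm (hm : 1 ≤ m) (hcop : IsCoprime a (m : ℤ))
    (hA : 2 ≤ A) (hAB : A < B)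
    (hΦ : ∀ u ∈ Set.Icc A B, HasDerivAt Φ (Φ' u) u)
    (hΦ' : ContinuousOn Φ' (Set.Icc A B))
    (hM : ∀ u ∈ Set.Icc A B, |Φ u| ≤ M) (hV : V = ∫ u in A..B, |Φ' u|) :
    |(∑ p ∈ (Finset.range (Nat.floor B + 1)).filter
          (fun p : ℕ => p.Prime ∧ A < (p : ℝ) ∧ (p : ℝ) ≤ B ∧
            (p : ℤ) % ((m : ℤ) ^ 2) = a % ((m : ℤ) ^ 2)),
        Φ p * Real.log p)
      - (Nat.totient (m ^ 2) : ℝ)⁻¹ * ∫ u in A..B, Φ u|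
      ≤ 1154 * (M + V) * (Real.sqrt B + ⨆ u : Set.Icc A B, Efn u (m ^ 2) a) := by
  set q : ℕ := m ^ 2 with hqdef
  rw [show ((m:ℤ)^2) = ((q:ℕ):ℤ) by rw [hqdef]; push_cast; ring]
  have hφpos : (0:ℝ) < (Nat.totient q : ℝ) := by
    have : 0 < Nat.totient q := Nat.totient_pos.mpr (by positivity)
    exact_mod_cast this
  have hφ1 : (1:ℝ) ≤ (Nat.totient q : ℝ) := by
    have : 1 ≤ Nat.totient q := Nat.totient_pos.mpr (by positivity)
    exact_mod_cast this
  set φR : ℝ := (Nat.totient q : ℝ) with hφdef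
  have hA0 : (0:ℝ) ≤ A := by linarith
  have hB2 : (2:ℝ) ≤ B := by linarith
  have hB0 : (0:ℝ) < B := by linarith
  set c : ℕ → ℝ := fun n =>
    if (n : ℤ) % (q : ℤ) = a % (q : ℤ) then ArithmeticFunction.vonMangoldt n else 0 with hcdef
  have hc0 : c 0 = 0 := by
    rw [hcdef]; dsimp only; split <;> simp
  have hcnonneg : ∀ k, 0 ≤ c k := by
    intro k; rw [hcdef]; dsimp only; split
    · exact ArithmeticFunction.vonMangoldt_nonneg
    · exact le_refl 0
  have hcle : ∀ k, c k ≤ Λ k := by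
    intro k; rw [hcdef]; dsimp only; split
    · exact le_refl _
    · exact ArithmeticFunction.vonMangoldt_nonneg
  -- partial sums equal the Efn sums
  have hCs1 : ∀ t : ℝ, ∑ k ∈ Finset.Icc 0 (Nat.floor t), c k
      = ∑ k ∈ Finset.Icc 1 (Nat.floor t), c k := by
    intro t
    rw [Finset.Icc_eq_cons_Ioc (Nat.zero_le _), Finset.sum_cons, hc0, zero_add,
      ← Finset.Icc_add_one_left_eq_Ioc, zero_add]
  have herr : ∀ u : ℝ, |(∑ k ∈ Finset.Icc 0 (Nat.floor u), c k) - u / φR| = Efn u q a := by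
    intro u
    rw [hCs1, Efn, hcdef, hφdef]
  -- differentiability and integrability
  have hdiff : ∀ t ∈ Set.Icc A B, DifferentiableAt ℝ Φ t := fun t ht => (hΦ t ht).differentiableAt
  have hderiv : ∀ t ∈ Set.Icc A B, deriv Φ t = Φ' t := fun t ht => (hΦ t ht).deriv
  have hΦ'int : MeasureTheory.IntegrableOn Φ' (Set.Icc A B) := hΦ'.integrableOn_Icc
  have hint : MeasureTheory.IntegrableOn (deriv Φ) (Set.Icc A B) :=
    hΦ'int.congr_fun (fun t ht => (hderiv t ht).symm) measurableSet_Icc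
  have hΦcont : ContinuousOn Φ (Set.Icc A B) :=
    fun t ht => (hΦ t ht).continuousAt.continuousWithinAt
  -- Abel summation
  have hAbel := sum_mul_eq_sub_sub_integral_mul c hA0 hAB.le hdiff hint
  -- integrability of the partial-sum function
  have hCsMono : MonotoneOn (fun t => ∑ k ∈ Finset.Icc 0 (Nat.floor t), c k) (Set.Icc A B) := by
    intro s _ t _ hst
    exact Finset.sum_le_sum_of_subset_of_nonneg
      (Finset.Icc_subset_Icc_right (Nat.floor_le_floor hst)) (fun k _ _ => hcnonneg k)
  have hCsInt : MeasureTheory.IntegrableOn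
      (fun t => ∑ k ∈ Finset.Icc 0 (Nat.floor t), c k) (Set.Icc A B) :=
    hCsMono.integrableOn_isCompact isCompact_Icc
  have hprodInt : MeasureTheory.IntegrableOn
      (fun t => Φ' t * ∑ k ∈ Finset.Icc 0 (Nat.floor t), c k) (Set.Icc A B) :=
    MeasureTheory.IntegrableOn.continuousOn_mul hΦ' hCsInt isCompact_Icc
  have hIoc_sub : Set.Ioc A B ⊆ Set.Icc A B := Set.Ioc_subset_Icc_self
  have htφcont : ContinuousOn (fun t : ℝ => Φ' t * (t / φR)) (Set.Icc A B) :=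
    hΦ'.mul (continuousOn_id.div_const _)
  have hint1 : MeasureTheory.IntegrableOn (fun t : ℝ => Φ' t * (t / φR)) (Set.Ioc A B) :=
    (htφcont.integrableOn_Icc).mono_set hIoc_sub
  have hint2 : MeasureTheory.IntegrableOn
      (fun t => Φ' t * ((∑ k ∈ Finset.Icc 0 (Nat.floor t), c k) - t / φR)) (Set.Ioc A B) := by
    have h0 : MeasureTheory.IntegrableOn
        (fun t => Φ' t * (∑ k ∈ Finset.Icc 0 (Nat.floor t), c k) - Φ' t * (t / φR))
        (Set.Icc A B) := hprodInt.sub (htφcont.integrableOn_Icc)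
    have h0' := h0.mono_set hIoc_sub
    exact h0'.congr_fun (fun t _ => by ring) measurableSet_Ioc
  -- decompose the Abel integral
  have hIeq : (∫ t in Set.Ioc A B, deriv Φ t * ∑ k ∈ Finset.Icc 0 (Nat.floor t), c k)
      = (∫ t in Set.Ioc A B, Φ' t * (t / φR))
        + ∫ t in Set.Ioc A B, Φ' t * ((∑ k ∈ Finset.Icc 0 (Nat.floor t), c k) - t / φR) := by
    rw [← MeasureTheory.integral_add hint1 hint2]
    apply MeasureTheory.setIntegral_congr_fun measurableSet_Ioc
    intro t ht
    dsimp only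
    rw [hderiv t (hIoc_sub ht)]
    ring
  -- sup of the error function
  have hEfn_bdd : ∀ u ∈ Set.Icc A B, Efn u q a
      ≤ (∑ k ∈ Finset.Icc 1 (Nat.floor B), Λ k) + B := by
    intro u hu
    rw [← herr u]
    have h1 : |(∑ k ∈ Finset.Icc 0 (Nat.floor u), c k) - u / φR|
        ≤ |∑ k ∈ Finset.Icc 0 (Nat.floor u), c k| + |u / φR| := abs_sub _ _
    have h2 : |∑ k ∈ Finset.Icc 0 (Nat.floor u), c k|
        ≤ ∑ k ∈ Finset.Icc 1 (Nat.floor B), Λ k := by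
      rw [abs_of_nonneg (Finset.sum_nonneg fun k _ => hcnonneg k), hCs1]
      calc ∑ k ∈ Finset.Icc 1 (Nat.floor u), c k
          ≤ ∑ k ∈ Finset.Icc 1 (Nat.floor u), Λ k := Finset.sum_le_sum fun k _ => hcle k
        _ ≤ ∑ k ∈ Finset.Icc 1 (Nat.floor B), Λ k :=
            Finset.sum_le_sum_of_subset_of_nonneg
              (Finset.Icc_subset_Icc_right (Nat.floor_le_floor hu.2))
              (fun k _ _ => ArithmeticFunction.vonMangoldt_nonneg)
    have h3 : |u / φR| ≤ B := by
      have hu0 : 0 ≤ u := le_trans hA0 hu.1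
      rw [abs_of_nonneg (by positivity)]
      calc u / φR ≤ u := div_le_self hu0 hφ1
        _ ≤ B := hu.2
    linarith
  have hbdd : BddAbove (Set.range fun u : Set.Icc A B => Efn u q a) := by
    refine ⟨(∑ k ∈ Finset.Icc 1 (Nat.floor B), Λ k) + B, ?_⟩
    rintro x ⟨u, rfl⟩
    exact hEfn_bdd u u.2
  have hAmem : A ∈ Set.Icc A B := ⟨le_refl _, hAB.le⟩
  have hBmem : B ∈ Set.Icc A B := ⟨hAB.le, le_refl _⟩
  set E : ℝ := ⨆ u : Set.Icc A B, Efn u q a with hEdef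
  have hle_E : ∀ u ∈ Set.Icc A B, Efn u q a ≤ E := fun u hu =>
    le_ciSup hbdd (⟨u, hu⟩ : Set.Icc A B)
  have hEfn_nonneg : ∀ u : ℝ, 0 ≤ Efn u q a := fun u => le_of_le_of_eq (abs_nonneg _) (herr u)
  have hE0 : 0 ≤ E := le_trans (hEfn_nonneg A) (hle_E A hAmem)
  have hM0 : 0 ≤ M := (abs_nonneg _).trans (hM A hAmem)
  have hV0 : 0 ≤ V := by
    rw [hV]
    exact intervalIntegral.integral_nonneg hAB.le (fun u _ => abs_nonneg _)
  have hVIoc : V = ∫ t in Set.Ioc A B, |Φ' t| := by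
    rw [hV, intervalIntegral.integral_of_le hAB.le]
  -- bound on J2
  have hJ2 : |∫ t in Set.Ioc A B, Φ' t * ((∑ k ∈ Finset.Icc 0 (Nat.floor t), c k) - t / φR)|
      ≤ V * E := by
    have hgint : MeasureTheory.IntegrableOn (fun t => |Φ' t| * E) (Set.Ioc A B) :=
      ((hΦ'.abs.mul continuousOn_const).integrableOn_Icc).mono_set hIoc_sub
    have hae : ∀ᵐ t ∂(MeasureTheory.volume.restrict (Set.Ioc A B)),
        ‖Φ' t * ((∑ k ∈ Finset.Icc 0 (Nat.floor t), c k) - t / φR)‖ ≤ |Φ' t| * E := by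
      rw [MeasureTheory.ae_restrict_iff' measurableSet_Ioc]
      apply MeasureTheory.ae_of_all
      intro t ht
      rw [Real.norm_eq_abs, abs_mul]
      apply mul_le_mul_of_nonneg_left _ (abs_nonneg _)
      rw [herr t]
      exact hle_E t (hIoc_sub ht)
    calc |∫ t in Set.Ioc A B, Φ' t * ((∑ k ∈ Finset.Icc 0 (Nat.floor t), c k) - t / φR)|
        ≤ ∫ t in Set.Ioc A B, |Φ' t| * E :=
          MeasureTheory.norm_integral_le_of_norm_le hgint hae
      _ = (∫ t in Set.Ioc A B, |Φ' t|) * E := by rw [MeasureTheory.integral_mul_const]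
      _ = V * E := by rw [hVIoc]
  -- J1
  have hJ1 : (∫ t in Set.Ioc A B, Φ' t * (t / φR)) = (∫ t in A..B, t * Φ' t) / φR := by
    rw [← intervalIntegral.integral_of_le hAB.le, ← intervalIntegral.integral_div]
    apply intervalIntegral.integral_congr
    intro t _
    ring
  -- integration by parts identity
  have hUIcc : Set.uIcc A B = Set.Icc A B := Set.uIcc_of_le hAB.le
  have hIBP : ∫ t in A..B, (Φ t + t * Φ' t) = B * Φ B - A * Φ A := by
    apply intervalIntegral.integral_eq_sub_of_hasDerivAt
    · intro t ht
      rw [hUIcc] at ht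
      have h1 := (hasDerivAt_id' (x := t)).mul (hΦ t ht)
      exact h1.congr_deriv (by simp)
    · apply ContinuousOn.intervalIntegrable
      rw [hUIcc]
      exact hΦcont.add (continuousOn_id.mul hΦ')
  have hΦII : IntervalIntegrable Φ MeasureTheory.volume A B :=
    ContinuousOn.intervalIntegrable (by rw [hUIcc]; exact hΦcont)
  have htΦ'II : IntervalIntegrable (fun t => t * Φ' t) MeasureTheory.volume A B :=
    ContinuousOn.intervalIntegrable (by rw [hUIcc]; exact continuousOn_id.mul hΦ')
  have hsplitInt : ∫ t in A..B, Φ t = (B * Φ B - A * Φ A) - ∫ t in A..B, t * Φ' t := by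
    have hadd := intervalIntegral.integral_add hΦII htΦ'II
    rw [hadd] at hIBP
    linarith
  -- the set of primes matches
  have hsetEq : (Finset.range (Nat.floor B + 1)).filter
        (fun p : ℕ => p.Prime ∧ A < (p:ℝ) ∧ (p:ℝ) ≤ B ∧ (p:ℤ) % (q:ℤ) = a % (q:ℤ))
      = (Finset.Ioc (Nat.floor A) (Nat.floor B)).filter
        (fun p : ℕ => p.Prime ∧ (p:ℤ) % (q:ℤ) = a % (q:ℤ)) := by
    ext p
    simp only [Finset.mem_filter, Finset.mem_range, Finset.mem_Ioc, Nat.lt_succ_iff]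
    constructor
    · rintro ⟨_, hp, hpA, hpB, hc⟩
      exact ⟨⟨(Nat.floor_lt hA0).mpr hpA, Nat.le_floor hpB⟩, hp, hc⟩
    · rintro ⟨⟨hpA, hpB⟩, hp, hc⟩
      refine ⟨hpB, hp, (Nat.floor_lt hA0).mp hpA, ?_, hc⟩
      exact (Nat.le_floor_iff hB0.le).mp hpB
  -- P equals the sum over the filtered Ioc with weights c
  have hPsum : (∑ p ∈ (Finset.range (Nat.floor B + 1)).filter
        (fun p : ℕ => p.Prime ∧ A < (p:ℝ) ∧ (p:ℝ) ≤ B ∧ (p:ℤ) % (q:ℤ) = a % (q:ℤ)),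
        Φ p * Real.log p)
      = ∑ p ∈ (Finset.Ioc (Nat.floor A) (Nat.floor B)).filter
        (fun p : ℕ => p.Prime ∧ (p:ℤ) % (q:ℤ) = a % (q:ℤ)), Φ p * c p := by
    rw [hsetEq]
    apply Finset.sum_congr rfl
    intro p hp
    simp only [Finset.mem_filter] at hp
    rw [hcdef]
    dsimp only
    rw [if_pos hp.2.2, ArithmeticFunction.vonMangoldt_apply_prime hp.2.1]
  -- difference between T and P
  have hTsplit := Finset.sum_filter_add_sum_filter_not (Finset.Ioc (Nat.floor A) (Nat.floor B))
    (fun p : ℕ => p.Prime ∧ (p:ℤ) % (q:ℤ) = a % (q:ℤ)) (fun k : ℕ => Φ k * c k)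
  have hPT : |(∑ k ∈ Finset.Ioc (Nat.floor A) (Nat.floor B), Φ k * c k)
      - ∑ p ∈ (Finset.range (Nat.floor B + 1)).filter
        (fun p : ℕ => p.Prime ∧ A < (p:ℝ) ∧ (p:ℝ) ≤ B ∧ (p:ℤ) % (q:ℤ) = a % (q:ℤ)),
        Φ p * Real.log p|
      ≤ M * ∑ k ∈ (Finset.Icc 0 (Nat.floor B)).filter (fun k => ¬ k.Prime), Λ k := by
    rw [hPsum, ← hTsplit, add_sub_cancel_left]
    have hb1 : ∀ k ∈ (Finset.Ioc (Nat.floor A) (Nat.floor B)).filter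
        (fun p : ℕ => ¬(p.Prime ∧ (p:ℤ) % (q:ℤ) = a % (q:ℤ))),
        |Φ k * c k| ≤ M * (if k.Prime then 0 else Λ k) := by
      intro k hk
      simp only [Finset.mem_filter, Finset.mem_Ioc] at hk
      obtain ⟨⟨hkA, hkB⟩, hnk⟩ := hk
      by_cases hcong : (k:ℤ) % (q:ℤ) = a % (q:ℤ)
      · have hknp : ¬ k.Prime := fun hp => hnk ⟨hp, hcong⟩
        rw [if_neg hknp, abs_mul]
        have hkmem : (k:ℝ) ∈ Set.Icc A B := by
          constructor
          · exact le_of_lt ((Nat.floor_lt hA0).mp hkA)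
          · exact (Nat.le_floor_iff hB0.le).mp hkB
        have h1 : |c k| ≤ Λ k := by
          rw [abs_of_nonneg (hcnonneg k)]; exact hcle k
        exact mul_le_mul (hM _ hkmem) h1 (abs_nonneg _) hM0
      · have : c k = 0 := by rw [hcdef]; exact if_neg hcong
        rw [this, mul_zero, abs_zero]
        split
        · simp
        · exact mul_nonneg hM0 ArithmeticFunction.vonMangoldt_nonneg
    calc |∑ k ∈ (Finset.Ioc (Nat.floor A) (Nat.floor B)).filter
          (fun p : ℕ => ¬(p.Prime ∧ (p:ℤ) % (q:ℤ) = a % (q:ℤ))), Φ k * c k|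
        ≤ ∑ k ∈ (Finset.Ioc (Nat.floor A) (Nat.floor B)).filter
          (fun p : ℕ => ¬(p.Prime ∧ (p:ℤ) % (q:ℤ) = a % (q:ℤ))), |Φ k * c k| :=
          Finset.abs_sum_le_sum_abs _ _
      _ ≤ ∑ k ∈ (Finset.Ioc (Nat.floor A) (Nat.floor B)).filter
          (fun p : ℕ => ¬(p.Prime ∧ (p:ℤ) % (q:ℤ) = a % (q:ℤ))),
            M * (if k.Prime then 0 else Λ k) := Finset.sum_le_sum hb1
      _ ≤ ∑ k ∈ Finset.Icc 0 (Nat.floor B), M * (if k.Prime then 0 else Λ k) := by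
          apply Finset.sum_le_sum_of_subset_of_nonneg
          · intro k hk
            simp only [Finset.mem_filter, Finset.mem_Ioc] at hk
            simp only [Finset.mem_Icc]
            omega
          · intro k _ _
            split
            · simp
            · exact mul_nonneg hM0 ArithmeticFunction.vonMangoldt_nonneg
      _ = M * ∑ k ∈ (Finset.Icc 0 (Nat.floor B)).filter (fun k => ¬ k.Prime), Λ k := by
          rw [← Finset.mul_sum]
          congr 1
          rw [Finset.sum_filter]
          apply Finset.sum_congr rfl
          intro k _
          by_cases hk : k.Prime <;> simp [hk]
  -- key algebraic identity
  have hT := hAbel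
  rw [hIeq, hJ1] at hT
  have hkey : (∑ p ∈ (Finset.range (Nat.floor B + 1)).filter
        (fun p : ℕ => p.Prime ∧ A < (p:ℝ) ∧ (p:ℝ) ≤ B ∧ (p:ℤ) % (q:ℤ) = a % (q:ℤ)),
        Φ p * Real.log p) - φR⁻¹ * ∫ u in A..B, Φ u
      = -((∑ k ∈ Finset.Ioc (Nat.floor A) (Nat.floor B), Φ k * c k)
          - ∑ p ∈ (Finset.range (Nat.floor B + 1)).filter
            (fun p : ℕ => p.Prime ∧ A < (p:ℝ) ∧ (p:ℝ) ≤ B ∧ (p:ℤ) % (q:ℤ) = a % (q:ℤ)),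
            Φ p * Real.log p)
        + Φ B * ((∑ k ∈ Finset.Icc 0 (Nat.floor B), c k) - B / φR)
        - Φ A * ((∑ k ∈ Finset.Icc 0 (Nat.floor A), c k) - A / φR)
        - ∫ t in Set.Ioc A B, Φ' t * ((∑ k ∈ Finset.Icc 0 (Nat.floor t), c k) - t / φR) := by
    rw [hsplitInt, hT]
    field_simp
    ring
  have hb1 : |Φ B * ((∑ k ∈ Finset.Icc 0 (Nat.floor B), c k) - B / φR)| ≤ M * E := by
    rw [abs_mul]
    exact mul_le_mul (hM B hBmem) (by rw [herr B]; exact hle_E B hBmem) (abs_nonneg _) hM0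
  have hb2 : |Φ A * ((∑ k ∈ Finset.Icc 0 (Nat.floor A), c k) - A / φR)| ≤ M * E := by
    rw [abs_mul]
    exact mul_le_mul (hM A hAmem) (by rw [herr A]; exact hle_E A hAmem) (abs_nonneg _) hM0
  have hbS : |(∑ k ∈ Finset.Ioc (Nat.floor A) (Nat.floor B), Φ k * c k)
      - ∑ p ∈ (Finset.range (Nat.floor B + 1)).filter
        (fun p : ℕ => p.Prime ∧ A < (p:ℝ) ∧ (p:ℝ) ≤ B ∧ (p:ℤ) % (q:ℤ) = a % (q:ℤ)),
        Φ p * Real.log p| ≤ M * (1154 * Real.sqrt B) :=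
    hPT.trans (mul_le_mul_of_nonneg_left (Sbound B hB2) hM0)
  calc |(∑ p ∈ (Finset.range (Nat.floor B + 1)).filter
        (fun p : ℕ => p.Prime ∧ A < (p:ℝ) ∧ (p:ℝ) ≤ B ∧ (p:ℤ) % (q:ℤ) = a % (q:ℤ)),
        Φ p * Real.log p) - φR⁻¹ * ∫ u in A..B, Φ u|
      = |-((∑ k ∈ Finset.Ioc (Nat.floor A) (Nat.floor B), Φ k * c k)
          - ∑ p ∈ (Finset.range (Nat.floor B + 1)).filter
            (fun p : ℕ => p.Prime ∧ A < (p:ℝ) ∧ (p:ℝ) ≤ B ∧ (p:ℤ) % (q:ℤ) = a % (q:ℤ)),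
            Φ p * Real.log p)
        + Φ B * ((∑ k ∈ Finset.Icc 0 (Nat.floor B), c k) - B / φR)
        - Φ A * ((∑ k ∈ Finset.Icc 0 (Nat.floor A), c k) - A / φR)
        - ∫ t in Set.Ioc A B, Φ' t * ((∑ k ∈ Finset.Icc 0 (Nat.floor t), c k) - t / φR)| := by
        rw [hkey]
    _ ≤ |-((∑ k ∈ Finset.Ioc (Nat.floor A) (Nat.floor B), Φ k * c k)
          - ∑ p ∈ (Finset.range (Nat.floor B + 1)).filter
            (fun p : ℕ => p.Prime ∧ A < (p:ℝ) ∧ (p:ℝ) ≤ B ∧ (p:ℤ) % (q:ℤ) = a % (q:ℤ)),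
            Φ p * Real.log p)|
        + |Φ B * ((∑ k ∈ Finset.Icc 0 (Nat.floor B), c k) - B / φR)|
        + |Φ A * ((∑ k ∈ Finset.Icc 0 (Nat.floor A), c k) - A / φR)|
        + |∫ t in Set.Ioc A B, Φ' t * ((∑ k ∈ Finset.Icc 0 (Nat.floor t), c k) - t / φR)| :=
        abs_add4 _ _ _ _
    _ ≤ M * (1154 * Real.sqrt B) + M * E + M * E + V * E := by
        rw [abs_neg]
        exact add_le_add (add_le_add (add_le_add hbS hb1) hb2) hJ2
    _ ≤ 1154 * (M + V) * (Real.sqrt B + E) := by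
        nlinarith [mul_nonneg hM0 hE0, mul_nonneg hV0 hE0,
          mul_nonneg hV0 (Real.sqrt_nonneg B), mul_nonneg hM0 (Real.sqrt_nonneg B)]


end PSAuxiliary

/-- partial summation for primes in an arithmetic progression mod `m²`. -/
theorem partial_summation_ap :
    ∃ K : ℝ, 0 < K ∧
      ∀ (m : ℕ), 1 ≤ m → ∀ a : ℤ, IsCoprime a (m : ℤ) →
      ∀ A B : ℝ, 2 ≤ A → A < B →
      ∀ Φ Φ' : ℝ → ℝ,
        (∀ u ∈ Set.Icc A B, HasDerivAt Φ (Φ' u) u) →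
        ContinuousOn Φ' (Set.Icc A B) →
      ∀ M V : ℝ, (∀ u ∈ Set.Icc A B, |Φ u| ≤ M) → V = ∫ u in A..B, |Φ' u| →
      |(∑ p ∈ (Finset.range (Nat.floor B + 1)).filter
            (fun p : ℕ => p.Prime ∧ A < (p : ℝ) ∧ (p : ℝ) ≤ B ∧
              (p : ℤ) % ((m : ℤ) ^ 2) = a % ((m : ℤ) ^ 2)),
          Φ p * Real.log p)
        - (Nat.totient (m ^ 2) : ℝ)⁻¹ * ∫ u in A..B, Φ u|
        ≤ K * (M + V) * (Real.sqrt B + ⨆ u : Set.Icc A B, Efn u (m ^ 2) a) := by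
  refine ⟨1154, by norm_num, ?_⟩
  intro m hm a hcop A B hA hAB Φ Φ' hΦ hΦ' M V hM hV
  exact main_thm hm hcop hA hAB hΦ hΦ' hM hV
end
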